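/- Let n ≥ 2, γ ∈ (0,1), ε ∈ (0,1/4), r₀ ∈ (0,1/2), C₀ > 0, and b(r) = (n−2)/r + 2(r−r₀)₊/(ε + (r−r₀)₊²). Let V ∈ C²([r₀/2, 1)) satisfy |V'(r₀/2)| ≤ C₀ and V''(r) + b(r) V'(r) = A'(r) + B(r) on (r₀/2, 1), where A ∈ C¹((r₀/2,1)) and B ∈ C((r₀/2,1)) satisfy |A(r)| ≤ C₀ (r−r₀)₊^{γ}/(ε + (r−r₀)₊²)^{1/2} and |B(r)| ≤ C₀ (r−r₀)₊^{γ}/(ε + (r−r₀)₊²). Then |V'(r)| ≤ C (ε + (r−r₀)₊²)^{(γ−1)/2} for all r ∈ [r₀/2, 1), where C > 0 depends only on n, r₀, γ, and C₀ (in particular C is independent of ε). -/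

import Mathlib

open Set Filter Topology

/-!
Write `q(s) = ε + (s - r₀)₊²` and `μ(s) = s ^ (n - 2) q(s)`. Since `b = (n - 2)/s + q'/q`, we have
`μ' = b μ`, and the equation becomes `(μ (V' - A))' = μ B - μ' A`. The bounds on `A` and `B`
make the right-hand side `O((s - r₀)₊ ^ γ)` with a constant independent of `ε`; in particular it
vanishes for `s ≤ r₀`. By the mean value theorem `μ(r) (V'(r) - A(r))` therefore differs from
`μ(r₀/2) V'(r₀/2) = O(ε)` by `O((r - r₀)₊ ^ (γ + 1))`. Both are `O(q(r) ^ ((γ + 1)/2))`, and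
dividing by `μ(r) ≥ (r₀/2) ^ (n - 2) q(r)` gives the claim, since also
`A(r) = O(q(r) ^ ((γ - 1)/2))`.
-/

/-- The coefficient `b(r) = (n−2)/r + 2(r−r₀)₊/(ε + (r−r₀)₊²)`. -/
noncomputable def bCoeff (n : ℕ) (r₀ ε r : ℝ) : ℝ :=
  ((n : ℝ) - 2)/r + 2 * max (r - r₀) 0 / (ε + max (r - r₀) 0 ^ 2)

theorem hasDerivAt_max_zero_sq (x : ℝ) :
    HasDerivAt (fun y : ℝ => max y 0 ^ 2) (2 * max x 0) x := by
  rcases lt_trichotomy x 0 with hx | rfl | hx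
  · have h : (fun y : ℝ => max y 0 ^ 2) =ᶠ[𝓝 x] fun _ => 0 := by
      filter_upwards [Iio_mem_nhds hx] with y hy
      simp [max_eq_right (mem_Iio.1 hy).le]
    simpa [max_eq_right hx.le] using (hasDerivAt_const x (0:ℝ)).congr_of_eventuallyEq h
  · have hl : HasDerivWithinAt (fun y : ℝ => max y 0 ^ 2) 0 (Iic 0) 0 :=
      (hasDerivWithinAt_const 0 _ (0:ℝ)).congr
        (fun y hy => by simp [max_eq_right (mem_Iic.1 hy)]) (by simp)
    have hsq : HasDerivWithinAt (fun y : ℝ => y ^ 2) 0 (Ici 0) 0 :=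
      (hasDerivAt_pow 2 (0:ℝ)).hasDerivWithinAt.congr_deriv (by norm_num)
    have hr : HasDerivWithinAt (fun y : ℝ => max y 0 ^ 2) 0 (Ici 0) 0 :=
      hsq.congr (fun y hy => by simp [max_eq_left (mem_Ici.1 hy)]) (by simp)
    simpa [Iic_union_Ici] using hl.union hr
  · have h : (fun y : ℝ => max y 0 ^ 2) =ᶠ[𝓝 x] fun y => y ^ 2 := by
      filter_upwards [Ioi_mem_nhds hx] with y hy
      rw [max_eq_left (mem_Ioi.1 hy).le]
    simpa [max_eq_left hx.le] using (hasDerivAt_pow 2 x).congr_of_eventuallyEq h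

theorem abs_sub_le_mul_of_hasDerivAt {f f' : ℝ → ℝ} {a b C : ℝ} (hab : a ≤ b)
    (hf : ContinuousOn f (Icc a b)) (hf' : ∀ x ∈ Ioo a b, HasDerivAt f (f' x) x)
    (hC : ∀ x ∈ Ioo a b, |f' x| ≤ C) : |f b - f a| ≤ C * (b - a) := by
  rcases hab.eq_or_lt with rfl | hab
  · simp
  obtain ⟨c, hc, hslope⟩ := exists_hasDerivAt_eq_slope f f' hab hf hf'
  rw [eq_div_iff (sub_pos.2 hab).ne'] at hslope
  rw [← hslope, abs_mul, abs_of_pos (sub_pos.2 hab)]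
  exact mul_le_mul_of_nonneg_right (hC c hc) (sub_pos.2 hab).le

theorem abs_sub_le_of_abs_deriv_le_rpow {f f' : ℝ → ℝ} {a b c K γ : ℝ} (hγ : 0 < γ)
    (hK : 0 ≤ K) (hac : a ≤ c) (hab : a ≤ b) (hf : ContinuousOn f (Icc a b))
    (hf' : ∀ x ∈ Ioo a b, HasDerivAt f (f' x) x)
    (hbound : ∀ x ∈ Ioo a b, |f' x| ≤ K * max (x - c) 0 ^ γ) :
    |f b - f a| ≤ K * max (b - c) 0 ^ γ * max (b - c) 0 := by
  set d := min b c
  have had : a ≤ d := le_min hab hac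
  have hdb : d ≤ b := min_le_left b c
  have hleft : |f d - f a| ≤ 0 * (d - a) := by
    refine abs_sub_le_mul_of_hasDerivAt had (hf.mono (Icc_subset_Icc_right hdb))
      (fun x hx => hf' x ⟨hx.1, hx.2.trans_le hdb⟩) fun x hx => ?_
    have hxc : x - c ≤ 0 := by linarith [hx.2, min_le_right b c]
    simpa [max_eq_right hxc, Real.zero_rpow hγ.ne'] using hbound x ⟨hx.1, hx.2.trans_le hdb⟩
  have hright : |f b - f d| ≤ K * max (b - c) 0 ^ γ * (b - d) := by
    refine abs_sub_le_mul_of_hasDerivAt hdb (hf.mono (Icc_subset_Icc_left had))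
      (fun x hx => hf' x ⟨had.trans_lt hx.1, hx.2⟩) fun x hx => ?_
    refine (hbound x ⟨had.trans_lt hx.1, hx.2⟩).trans (mul_le_mul_of_nonneg_left ?_ hK)
    exact Real.rpow_le_rpow (le_max_right _ _) (max_le_max_right 0 (by linarith [hx.2]))
      hγ.le
  have hbd : b - d = max (b - c) 0 := by
    rcases le_total b c with h | h <;> simp [d, h]
  calc |f b - f a| ≤ |f b - f d| + |f d - f a| := abs_sub_le _ _ _
    _ ≤ K * max (b - c) 0 ^ γ * max (b - c) 0 := by rw [hbd] at hright; linarith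

theorem HasDerivAt.mul_sub_of_linear_ode {μ W A : ℝ → ℝ} {x b W' A' B : ℝ}
    (hμ : HasDerivAt μ (b * μ x) x) (hW : HasDerivAt W W' x) (hA : HasDerivAt A A' x)
    (hode : W' + b * W x = A' + B) :
    HasDerivAt (fun s => μ s * (W s - A s)) (μ x * B - b * μ x * A x) x := by
  refine (hμ.mul (hW.sub hA)).congr_deriv ?_
  rw [Pi.sub_apply]
  linear_combination μ x * hode

theorem rpow_le_rpow_div_two_of_sq_le {x q γ : ℝ} (hx : 0 ≤ x) (hxq : x ^ 2 ≤ q) (hγ : 0 ≤ γ) :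
    x ^ γ ≤ q ^ (γ / 2) := by
  calc x ^ γ = (x ^ 2) ^ (γ / 2) := by
        rw [← Real.rpow_natCast, ← Real.rpow_mul hx]; ring_nf
    _ ≤ q ^ (γ / 2) := Real.rpow_le_rpow (sq_nonneg x) hxq (by positivity)

theorem rpow_mul_le_rpow_of_sq_le {x q γ : ℝ} (hx : 0 ≤ x) (hxq : x ^ 2 ≤ q) (hγ : 0 ≤ γ) :
    x ^ γ * x ≤ q ^ ((γ + 1) / 2) := by
  have hq : 0 ≤ q := (sq_nonneg x).trans hxq
  have h1 := rpow_le_rpow_div_two_of_sq_le hx hxq zero_le_one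
  rw [Real.rpow_one] at h1
  calc x ^ γ * x ≤ q ^ (γ / 2) * q ^ ((1 : ℝ) / 2) :=
        mul_le_mul (rpow_le_rpow_div_two_of_sq_le hx hxq hγ) h1 hx (by positivity)
    _ = q ^ ((γ + 1) / 2) := by rw [← Real.rpow_add' hq (by positivity)]; ring_nf

theorem rpow_div_rpow_half_le_of_sq_le {x q γ : ℝ} (hx : 0 ≤ x) (hq : 0 < q) (hxq : x ^ 2 ≤ q)
    (hγ : 0 ≤ γ) : x ^ γ / q ^ ((1 : ℝ) / 2) ≤ q ^ ((γ - 1) / 2) := by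
  calc x ^ γ / q ^ ((1 : ℝ) / 2) ≤ q ^ (γ / 2) / q ^ ((1 : ℝ) / 2) := by
        gcongr; exact rpow_le_rpow_div_two_of_sq_le hx hxq hγ
    _ = q ^ ((γ - 1) / 2) := by rw [← Real.rpow_sub hq]; ring_nf

theorem le_rpow_of_le_of_le_one {x q p : ℝ} (hx : 0 < x) (hx1 : x ≤ 1) (hxq : x ≤ q)
    (hp : 0 ≤ p) (hp1 : p ≤ 1) : x ≤ q ^ p :=
  calc x = x ^ (1 : ℝ) := (Real.rpow_one x).symm
    _ ≤ x ^ p := Real.rpow_le_rpow_of_exponent_ge hx hx1 hp1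
    _ ≤ q ^ p := Real.rpow_le_rpow hx.le hxq hp

def epsWeight (r₀ ε s : ℝ) : ℝ := ε + max (s - r₀) 0 ^ 2

def integratingFactor (n : ℕ) (r₀ ε s : ℝ) : ℝ := s ^ (n - 2) * epsWeight r₀ ε s

section

variable {r₀ ε : ℝ}

theorem hasDerivAt_epsWeight (s : ℝ) :
    HasDerivAt (epsWeight r₀ ε) (2 * max (s - r₀) 0) s :=
  ((hasDerivAt_max_zero_sq (s - r₀)).comp_sub_const s r₀).const_add ε

theorem continuous_epsWeight : Continuous (epsWeight r₀ ε) :=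
  continuous_iff_continuousAt.2 fun s => (hasDerivAt_epsWeight s).continuousAt

theorem epsWeight_pos (hε : 0 < ε) (s : ℝ) : 0 < epsWeight r₀ ε s := by
  unfold epsWeight; positivity

theorem le_epsWeight (s : ℝ) : ε ≤ epsWeight r₀ ε s :=
  le_add_of_nonneg_right (sq_nonneg _)

theorem sq_le_epsWeight (hε : 0 ≤ ε) (s : ℝ) : max (s - r₀) 0 ^ 2 ≤ epsWeight r₀ ε s :=
  le_add_of_nonneg_left hε

theorem epsWeight_le_four (hε : ε ≤ 1) {s : ℝ} (hs : s - r₀ ≤ 1) : epsWeight r₀ ε s ≤ 4 := by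
  have h0 : 0 ≤ max (s - r₀) 0 := le_max_right _ _
  have h1 : max (s - r₀) 0 ≤ 1 := max_le hs zero_le_one
  unfold epsWeight; nlinarith

theorem epsWeight_eq_of_le {s : ℝ} (hs : s ≤ r₀) : epsWeight r₀ ε s = ε := by
  simp [epsWeight, max_eq_right (sub_nonpos.2 hs)]

theorem hasDerivAt_integratingFactor {n : ℕ} (hn : 2 ≤ n) (hε : 0 < ε) {s : ℝ} (hs : s ≠ 0) :
    HasDerivAt (integratingFactor n r₀ ε) (bCoeff n r₀ ε s * integratingFactor n r₀ ε s) s := by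
  have hq := (epsWeight_pos (r₀ := r₀) hε s).ne'
  refine ((hasDerivAt_pow (n - 2) s).mul (hasDerivAt_epsWeight s)).congr_deriv ?_
  rw [bCoeff, show ε + max (s - r₀) 0 ^ 2 = epsWeight r₀ ε s from rfl, integratingFactor]
  obtain ⟨k, rfl⟩ := Nat.exists_eq_add_of_le' hn
  rcases k with _ | k
  · simp
    field_simp
  · simp only [Nat.add_sub_cancel]
    push_cast
    field_simp
    ring

theorem continuous_integratingFactor (n : ℕ) : Continuous (integratingFactor n r₀ ε) :=
  (continuous_pow _).mul continuous_epsWeight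

theorem integratingFactor_le_epsWeight (n : ℕ) (hε : 0 ≤ ε) {s : ℝ} (hs0 : 0 ≤ s) (hs1 : s ≤ 1) :
    integratingFactor n r₀ ε s ≤ epsWeight r₀ ε s :=
  mul_le_of_le_one_left (hε.trans (le_epsWeight s)) (pow_le_one₀ hs0 hs1)

theorem pow_mul_epsWeight_le_integratingFactor (n : ℕ) (hε : 0 ≤ ε) {s : ℝ} (hr₀ : 0 ≤ r₀)
    (hs : r₀ / 2 ≤ s) : (r₀ / 2) ^ (n - 2) * epsWeight r₀ ε s ≤ integratingFactor n r₀ ε s :=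
  mul_le_mul_of_nonneg_right (pow_le_pow_left₀ (by positivity) hs _)
    (hε.trans (le_epsWeight s))

theorem bCoeff_mul_integratingFactor {n : ℕ} (hε : 0 < ε) (s : ℝ) :
    bCoeff n r₀ ε s * integratingFactor n r₀ ε s =
      ((n : ℝ) - 2) / s * s ^ (n - 2) * epsWeight r₀ ε s + 2 * max (s - r₀) 0 * s ^ (n - 2) := by
  have hq := (epsWeight_pos (r₀ := r₀) hε s).ne'
  rw [bCoeff, show ε + max (s - r₀) 0 ^ 2 = epsWeight r₀ ε s from rfl, integratingFactor]
  field_simp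

theorem bCoeff_mul_integratingFactor_nonneg {n : ℕ} (hn : 2 ≤ n) (hε : 0 < ε) {s : ℝ}
    (hs : 0 < s) : 0 ≤ bCoeff n r₀ ε s * integratingFactor n r₀ ε s := by
  have hn2 : (2 : ℝ) ≤ n := by exact_mod_cast hn
  have hq := epsWeight_pos (r₀ := r₀) hε s
  rw [bCoeff_mul_integratingFactor hε]
  have : (0 : ℝ) ≤ (n : ℝ) - 2 := by linarith
  positivity

theorem bCoeff_mul_integratingFactor_le {n : ℕ} (hn : 2 ≤ n) (hr₀ : 0 < r₀) (hε : 0 < ε)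
    (hε1 : ε ≤ 1) {s : ℝ} (hs : s ∈ Ioo (r₀ / 2) 1) :
    bCoeff n r₀ ε s * integratingFactor n r₀ ε s
      ≤ (4 * n / r₀ + 2) * epsWeight r₀ ε s ^ ((1 : ℝ) / 2) := by
  obtain ⟨hs0, hs1⟩ := hs
  have hs : 0 < s := by linarith
  have hn2 : (0 : ℝ) ≤ (n : ℝ) - 2 := by
    have : (2 : ℝ) ≤ n := by exact_mod_cast hn
    linarith
  set t := max (s - r₀) 0
  set q := epsWeight r₀ ε s
  set σ := q ^ ((1 : ℝ) / 2)
  have hq : 0 < q := epsWeight_pos hε s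
  have hσ : 0 < σ := Real.rpow_pos_of_pos hq _
  have hσσ : σ * σ = q := by rw [← Real.rpow_add hq]; norm_num
  have hσ2 : σ ≤ 2 := by
    nlinarith [epsWeight_le_four (r₀ := r₀) hε1 (show s - r₀ ≤ 1 by linarith)]
  have hq2 : q ≤ 2 * σ := by rw [← hσσ]; exact mul_le_mul_of_nonneg_right hσ2 hσ.le
  have htσ : t ≤ σ := by
    simpa only [Real.rpow_one] using
      rpow_le_rpow_div_two_of_sq_le (le_max_right _ _) (sq_le_epsWeight hε.le s) zero_le_one
  have hpow : s ^ (n - 2) ≤ 1 := pow_le_one₀ hs.le hs1.le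
  have hcoef : ((n : ℝ) - 2) / s * s ^ (n - 2) ≤ 2 * n / r₀ :=
    calc ((n : ℝ) - 2) / s * s ^ (n - 2) ≤ ((n : ℝ) - 2) / s :=
          mul_le_of_le_one_right (by positivity) hpow
      _ ≤ n / (r₀ / 2) := div_le_div₀ (by positivity) (by linarith) (by positivity) hs0.le
      _ = 2 * n / r₀ := by field_simp
  have h1 : ((n : ℝ) - 2) / s * s ^ (n - 2) * q ≤ 2 * n / r₀ * (2 * σ) :=
    (mul_le_mul_of_nonneg_right hcoef hq.le).trans
      (mul_le_mul_of_nonneg_left hq2 (by positivity))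
  have h2 : 2 * t * s ^ (n - 2) ≤ 2 * σ := by
    nlinarith [mul_le_of_le_one_right (le_max_right (s - r₀) 0) hpow]
  rw [bCoeff_mul_integratingFactor hε]
  linarith [show (4 * n / r₀ + 2) * σ = 2 * n / r₀ * (2 * σ) + 2 * σ by ring]

end

theorem abs_integratingFactor_mul_sub_le {n : ℕ} (hn : 2 ≤ n) {r₀ ε C₀ γ s a c : ℝ}
    (hr₀ : 0 < r₀) (hε : 0 < ε) (hε1 : ε ≤ 1) (hs : s ∈ Ioo (r₀ / 2) 1)
    (ha : |a| ≤ C₀ * max (s - r₀) 0 ^ γ / epsWeight r₀ ε s ^ ((1 : ℝ) / 2))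
    (hc : |c| ≤ C₀ * max (s - r₀) 0 ^ γ / epsWeight r₀ ε s) :
    |integratingFactor n r₀ ε s * c - bCoeff n r₀ ε s * integratingFactor n r₀ ε s * a|
      ≤ C₀ * (3 + 4 * n / r₀) * max (s - r₀) 0 ^ γ := by
  have hs0 : 0 < s := by linarith [hs.1]
  have hq := epsWeight_pos (r₀ := r₀) hε s
  have hσ := Real.rpow_pos_of_pos hq ((1 : ℝ) / 2)
  have hμ0 : 0 ≤ integratingFactor n r₀ ε s := mul_nonneg (pow_nonneg hs0.le _) hq.le
  have hμ := integratingFactor_le_epsWeight (r₀ := r₀) n hε.le hs0.le hs.2.le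
  have hbμ0 := bCoeff_mul_integratingFactor_nonneg (r₀ := r₀) hn hε hs0
  have hbμ := bCoeff_mul_integratingFactor_le hn hr₀ hε hε1 hs
  have ha0 := (abs_nonneg a).trans ha
  have hc0 := (abs_nonneg c).trans hc
  calc _ ≤ integratingFactor n r₀ ε s * |c| +
        bCoeff n r₀ ε s * integratingFactor n r₀ ε s * |a| := by
        refine (abs_sub _ _).trans ?_
        rw [abs_mul, abs_mul, abs_of_nonneg hμ0, abs_of_nonneg hbμ0]
    _ ≤ epsWeight r₀ ε s * (C₀ * max (s - r₀) 0 ^ γ / epsWeight r₀ ε s) +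
        (4 * n / r₀ + 2) * epsWeight r₀ ε s ^ ((1 : ℝ) / 2) *
          (C₀ * max (s - r₀) 0 ^ γ / epsWeight r₀ ε s ^ ((1 : ℝ) / 2)) := by
        gcongr
    _ = C₀ * (3 + 4 * n / r₀) * max (s - r₀) 0 ^ γ := by
        field_simp
        ring

theorem abs_le_rpow_of_abs_mul_sub_sub_le {μ q t w a m₀ P ε C₀ K γ : ℝ} (hP : 0 < P)
    (hε : 0 < ε) (hε1 : ε ≤ 1) (hεq : ε ≤ q) (ht : 0 ≤ t) (htq : t ^ 2 ≤ q) (hγ : 0 ≤ γ)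
    (hγ1 : γ ≤ 1) (hC₀ : 0 ≤ C₀) (hK : 0 ≤ K) (hμ : P * q ≤ μ)
    (hm₀ : |m₀| ≤ ε * C₀) (hmain : |μ * (w - a) - m₀| ≤ K * t ^ γ * t)
    (ha : |a| ≤ C₀ * t ^ γ / q ^ ((1 : ℝ) / 2)) :
    |w| ≤ (C₀ + (C₀ + K) / P) * q ^ ((γ - 1) / 2) := by
  have hq : 0 < q := hε.trans_le hεq
  have hqγ : q ^ ((γ + 1) / 2) = q * q ^ ((γ - 1) / 2) := by
    rw [← Real.rpow_one_add' hq.le (by linarith)]; ring_nf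
  have hμwa : P * q * |w - a| ≤ (C₀ + K) * q ^ ((γ + 1) / 2) := by
    have hε' := le_rpow_of_le_of_le_one hε hε1 hεq (p := (γ + 1) / 2) (by linarith) (by linarith)
    have ht' := rpow_mul_le_rpow_of_sq_le ht htq hγ
    have hμabs : μ * |w - a| = |μ * (w - a)| := by
      rw [abs_mul, abs_of_nonneg ((by positivity : 0 ≤ P * q).trans hμ)]
    calc P * q * |w - a| ≤ μ * |w - a| := mul_le_mul_of_nonneg_right hμ (abs_nonneg _)
      _ ≤ |m₀| + K * t ^ γ * t := by
          rw [hμabs]; linarith [abs_sub_abs_le_abs_sub (μ * (w - a)) m₀]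
      _ ≤ ε * C₀ + K * (t ^ γ * t) := by rw [mul_assoc]; linarith
      _ ≤ q ^ ((γ + 1) / 2) * C₀ + K * q ^ ((γ + 1) / 2) := by gcongr
      _ = (C₀ + K) * q ^ ((γ + 1) / 2) := by ring
  have hwa : |w - a| ≤ (C₀ + K) / P * q ^ ((γ - 1) / 2) := by
    rw [hqγ] at hμwa
    rw [div_mul_eq_mul_div, le_div_iff₀ hP]
    nlinarith
  have ha' : |a| ≤ C₀ * q ^ ((γ - 1) / 2) := by
    rw [mul_div_assoc] at ha
    exact ha.trans
      (mul_le_mul_of_nonneg_left (rpow_div_rpow_half_le_of_sq_le ht hq htq hγ) hC₀)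
  linarith [abs_sub_abs_le_abs_sub w a]

theorem indicator_Ioi_eqOn {A : ℝ → ℝ} {r₀ γ C₀ ε : ℝ} (hγ : 0 < γ)
    (hAb : ∀ x ∈ Ioo (r₀ / 2) 1,
      |A x| ≤ C₀ * max (x - r₀) 0 ^ γ / epsWeight r₀ ε x ^ ((1 : ℝ) / 2)) :
    EqOn ((Ioi r₀).indicator A) A (Ioo (r₀ / 2) 1) := by
  intro x hx
  by_cases hxr : x ≤ r₀
  · have h := hAb x hx
    rw [max_eq_right (sub_nonpos.2 hxr), Real.zero_rpow hγ.ne', mul_zero, zero_div,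
      abs_nonpos_iff] at h
    rw [indicator_of_notMem (notMem_Ioi.2 hxr), h]
  · exact indicator_of_mem (mem_Ioi.2 (not_le.1 hxr)) A

theorem abs_indicator_Ioi_le {A : ℝ → ℝ} {r₀ γ C₀ ε r : ℝ} (hr₀ : 0 < r₀)
    (hε : 0 ≤ ε) (hC₀ : 0 ≤ C₀) (hr : r < 1)
    (hAb : ∀ x ∈ Ioo (r₀ / 2) 1,
      |A x| ≤ C₀ * max (x - r₀) 0 ^ γ / epsWeight r₀ ε x ^ ((1 : ℝ) / 2)) :
    |(Ioi r₀).indicator A r| ≤ C₀ * max (r - r₀) 0 ^ γ / epsWeight r₀ ε r ^ ((1 : ℝ) / 2) := by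
  by_cases hrr : r ≤ r₀
  · rw [indicator_of_notMem (notMem_Ioi.2 hrr), abs_zero]
    have hq := hε.trans (le_epsWeight (r₀ := r₀) r)
    positivity
  · rw [indicator_of_mem (mem_Ioi.2 (not_le.1 hrr))]
    exact hAb r ⟨by linarith [not_le.1 hrr], hr⟩

theorem abs_integratingFactor_mul_sub_sub_le {n : ℕ} (hn : 2 ≤ n) {r₀ γ C₀ ε : ℝ}
    (hr₀ : 0 < r₀) (hγ : 0 < γ) (hε : 0 < ε) (hε1 : ε ≤ 1) (hC₀ : 0 ≤ C₀)
    {W W' A B : ℝ → ℝ} (hWc : ContinuousOn W (Ico (r₀ / 2) 1))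
    (hW : ∀ x ∈ Ioo (r₀ / 2) 1, HasDerivAt W (W' x) x)
    (hA : ∀ x ∈ Ioo (r₀ / 2) 1, DifferentiableAt ℝ A x)
    (hAb : ∀ x ∈ Ioo (r₀ / 2) 1,
      |A x| ≤ C₀ * max (x - r₀) 0 ^ γ / epsWeight r₀ ε x ^ ((1 : ℝ) / 2))
    (hBb : ∀ x ∈ Ioo (r₀ / 2) 1, |B x| ≤ C₀ * max (x - r₀) 0 ^ γ / epsWeight r₀ ε x)
    (hode : ∀ x ∈ Ioo (r₀ / 2) 1, W' x + bCoeff n r₀ ε x * W x = deriv A x + B x)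
    {r : ℝ} (hr : r ∈ Ico (r₀ / 2) 1) :
    |integratingFactor n r₀ ε r * (W r - (Ioi r₀).indicator A r) -
        integratingFactor n r₀ ε (r₀ / 2) * W (r₀ / 2)|
      ≤ C₀ * (3 + 4 * n / r₀) * max (r - r₀) 0 ^ γ * max (r - r₀) 0 := by
  -- `A` vanishes on `(r₀/2, r₀]` but is unconstrained at `r₀/2`; cutting it off below `r₀`
  -- makes `μ (W - Ã)` continuous up to `r₀/2`.
  set Ã := (Ioi r₀).indicator A
  set μ := integratingFactor n r₀ ε
  have hÃ : EqOn Ã A (Ioo (r₀ / 2) 1) := indicator_Ioi_eqOn hγ hAb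
  have hÃc : ∀ x < 1, ContinuousAt Ã x := by
    intro x hx
    by_cases hxr : x < r₀
    · refine ContinuousAt.congr (f := fun _ => 0) continuousAt_const
        (eventually_of_mem (Iio_mem_nhds hxr) fun y hy => ?_)
      exact (indicator_of_notMem (notMem_Ioi.2 (mem_Iio.1 hy).le) A).symm
    · have hxI : x ∈ Ioo (r₀ / 2) 1 := ⟨by linarith [not_lt.1 hxr], hx⟩
      exact (hA x hxI).continuousAt.congr
        (hÃ.symm.eventuallyEq_of_mem (isOpen_Ioo.mem_nhds hxI))
  have hF : ∀ x ∈ Ioo (r₀ / 2) 1, HasDerivAt (fun s => μ s * (W s - Ã s))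
      (μ x * B x - bCoeff n r₀ ε x * μ x * A x) x := by
    intro x hx
    have hÃ' : HasDerivAt Ã (deriv A x) x := (hA x hx).hasDerivAt.congr_of_eventuallyEq
      (hÃ.eventuallyEq_of_mem (isOpen_Ioo.mem_nhds hx))
    have hμ := hasDerivAt_integratingFactor (r₀ := r₀) hn hε (by linarith [hx.1] : x ≠ 0)
    have h := hμ.mul_sub_of_linear_ode (hW x hx) hÃ' (hode x hx)
    rwa [hÃ hx] at h
  have hFc : ContinuousOn (fun s => μ s * (W s - Ã s)) (Icc (r₀ / 2) r) :=
    (continuous_integratingFactor n).continuousOn.mul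
      ((hWc.mono (Icc_subset_Ico_right hr.2)).sub
        fun x hx => (hÃc x (hx.2.trans_lt hr.2)).continuousWithinAt)
  have h := abs_sub_le_of_abs_deriv_le_rpow hγ (by positivity) (by linarith) hr.1 hFc
    (fun x hx => hF x ⟨hx.1, hx.2.trans hr.2⟩)
    (fun x hx => abs_integratingFactor_mul_sub_le hn hr₀ hε hε1 ⟨hx.1, hx.2.trans hr.2⟩
      (hAb x ⟨hx.1, hx.2.trans hr.2⟩) (hBb x ⟨hx.1, hx.2.trans hr.2⟩))
  have hÃ0 : Ã (r₀ / 2) = 0 := indicator_of_notMem (by simp; linarith) A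
  simpa only [hÃ0, sub_zero] using h

/-- Let `n ≥ 2`, `γ ∈ (0,1)`, `ε ∈ (0,1/4)`, `r₀ ∈ (0,1/2)`, `C₀ > 0`.
If `V ∈ C²([r₀/2,1))` satisfies `|V'(r₀/2)| ≤ C₀` and `V'' + b V' = A' + B` on
`(r₀/2, 1)` with `|A(r)| ≤ C₀ (r−r₀)₊^γ (ε+(r−r₀)₊²)^{−1/2}` and
`|B(r)| ≤ C₀ (r−r₀)₊^γ (ε+(r−r₀)₊²)^{−1}`, then
`|V'(r)| ≤ C (ε + (r−r₀)₊²)^{(γ−1)/2}` on `[r₀/2, 1)`, where `C > 0` depends only on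
`n`, `r₀`, `γ`, `C₀` (in particular `C` is independent of `ε`). Derivatives of `V` are
taken within `[r₀/2, 1)`. -/
theorem stmt17 (n : ℕ) (hn : 2 ≤ n) (r₀ γ C₀ : ℝ)
    (hr₀ : r₀ ∈ Ioo (0:ℝ) (1/2)) (hγ : γ ∈ Ioo (0:ℝ) 1) (hC₀ : 0 < C₀) :
    ∃ C : ℝ, 0 < C ∧
      ∀ ε : ℝ, ε ∈ Ioo (0:ℝ) (1/4) →
      ∀ V A B : ℝ → ℝ,
        (∀ r ∈ Ico (r₀/2) 1, DifferentiableWithinAt ℝ V (Ico (r₀/2) 1) r) →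
        (∀ r ∈ Ico (r₀/2) 1,
          DifferentiableWithinAt ℝ (derivWithin V (Ico (r₀/2) 1)) (Ico (r₀/2) 1) r) →
        ContinuousOn (derivWithin (derivWithin V (Ico (r₀/2) 1)) (Ico (r₀/2) 1))
          (Ico (r₀/2) 1) →
        |derivWithin V (Ico (r₀/2) 1) (r₀/2)| ≤ C₀ →
        (∀ r ∈ Ioo (r₀/2) 1, DifferentiableAt ℝ A r) →
        ContinuousOn (deriv A) (Ioo (r₀/2) 1) →
        ContinuousOn B (Ioo (r₀/2) 1) →
        (∀ r ∈ Ioo (r₀/2) 1,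
          |A r| ≤ C₀ * max (r - r₀) 0 ^ γ / (ε + max (r - r₀) 0 ^ 2) ^ ((1:ℝ)/2)) →
        (∀ r ∈ Ioo (r₀/2) 1,
          |B r| ≤ C₀ * max (r - r₀) 0 ^ γ / (ε + max (r - r₀) 0 ^ 2)) →
        (∀ r ∈ Ioo (r₀/2) 1,
          derivWithin (derivWithin V (Ico (r₀/2) 1)) (Ico (r₀/2) 1) r +
            bCoeff n r₀ ε r * derivWithin V (Ico (r₀/2) 1) r = deriv A r + B r) →
        ∀ r ∈ Ico (r₀/2) 1,
          |derivWithin V (Ico (r₀/2) 1) r| ≤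
            C * (ε + max (r - r₀) 0 ^ 2) ^ ((γ - 1)/2) := by
  obtain ⟨hr₀, hr₀1⟩ := hr₀
  obtain ⟨hγ0, hγ1⟩ := hγ
  set P := (r₀ / 2) ^ (n - 2)
  set K := C₀ * (3 + 4 * n / r₀)
  have hP : 0 < P := by positivity
  refine ⟨C₀ + (C₀ + K) / P, by positivity, ?_⟩
  rintro ε ⟨hε, hε1⟩ V A B - hV - hV₀ hA - - hAb hBb hode r hr
  set I := Ico (r₀ / 2) 1
  have hW : ∀ x ∈ Ioo (r₀ / 2) 1,
      HasDerivAt (derivWithin V I) (derivWithin (derivWithin V I) I x) x := fun x hx =>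
    (hV x (Ioo_subset_Ico_self hx)).hasDerivWithinAt.hasDerivAt (Ico_mem_nhds hx.1 hx.2)
  have hm₀ : |integratingFactor n r₀ ε (r₀ / 2) * derivWithin V I (r₀ / 2)| ≤ ε * C₀ := by
    rw [integratingFactor, epsWeight_eq_of_le (by linarith), abs_mul,
      abs_of_pos (by positivity)]
    have hP1 : P ≤ 1 := pow_le_one₀ (by positivity) (by linarith)
    calc P * ε * |derivWithin V I (r₀ / 2)| ≤ 1 * ε * C₀ := by gcongr
      _ = ε * C₀ := by ring
  exact abs_le_rpow_of_abs_mul_sub_sub_le hP hε (by linarith) (le_epsWeight r)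
    (le_max_right _ _) (sq_le_epsWeight hε.le r) hγ0.le hγ1.le hC₀.le (by positivity)
    (pow_mul_epsWeight_le_integratingFactor n hε.le hr₀.le hr.1) hm₀
    (abs_integratingFactor_mul_sub_sub_le hn hr₀ hγ0 hε (by linarith) hC₀.le
      (fun x hx => (hV x hx).continuousWithinAt) hW hA hAb hBb hode hr)
    (abs_indicator_Ioi_le hr₀ hε.le hC₀.le hr.2 hAb)
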